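/- Covariance-sum recursion in DBsample: under the 1-dimensional DBsample process with p ∈ (0,1) and 0 < α ≤ min((1-p)/p, p/(1-p)), defining S(k,ℓ) = Σ_{j≤ℓ, j≠k} Cov(z_k, z_j), for all k ≥ 1 and ℓ > k the relation S(k,ℓ) = S(k,ℓ-1) - (α/(ℓ-1))·(p(1-p) + S(k,ℓ-1)) holds. -/

import Mathlib

open Finset

/-- Value in ℝ of a Bernoulli outcome. -/
noncomputable def b2r (b : Bool) : ℝ := if b then 1 else 0

/-- Empirical mean p̂ₖ of the first k samples (0-based: samples x₀, …, x_{k-1}). -/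
noncomputable def phat {n : ℕ} (x : Fin n → Bool) (k : ℕ) : ℝ :=
  (k : ℝ)⁻¹ * ∑ j : Fin n, if (j : ℕ) < k ∧ x j = true then (1 : ℝ) else 0

/-- Parameter used by DBsample at (0-based) step k:
q₀ = p and q_k = clip(p(1+α) - α·p̂ₖ, 0, 1) for k ≥ 1. -/
noncomputable def dbq {n : ℕ} (p α : ℝ) (x : Fin n → Bool) (k : ℕ) : ℝ :=
  if k = 0 then p else min 1 (max 0 (p * (1 + α) - α * phat x k))

/-- Joint density of the n DBsample draws. -/
noncomputable def dbDens {n : ℕ} (p α : ℝ) (x : Fin n → Bool) : ℝ :=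
  ∏ k : Fin n, (if x k then dbq p α x (k : ℕ) else 1 - dbq p α x (k : ℕ))

/-- Covariance of the k-th and j-th DBsample draws. -/
noncomputable def dbCov {n : ℕ} (p α : ℝ) (k j : Fin n) : ℝ :=
  (∑ x : Fin n → Bool, dbDens p α x * (b2r (x k) * b2r (x j)))
    - (∑ x : Fin n → Bool, dbDens p α x * b2r (x k))
      * (∑ x : Fin n → Bool, dbDens p α x * b2r (x j))

/-- Partial covariance sum S(k, m) = Σ_{j ≤ m, j ≠ k} Cov(z_k, z_j) (0-based indices). -/
noncomputable def dbS {n : ℕ} (p α : ℝ) (k : Fin n) (m : ℕ) : ℝ :=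
  ∑ j : Fin n, if (j : ℕ) ≤ m ∧ j ≠ k then dbCov p α k j else 0

/-!
Given the first `m + 1` draws, draw `m + 1` is Bernoulli with parameter
`p (1 + α) - α p̂`, where `p̂` is the mean of those draws (the bound on `α` rules out clipping).
Multiplying by `z_k` and averaging expresses `E[z_k z_{m+1}]` through the second moments
`E[z_k z_j]`, `j ≤ m`, whose sum is `p + m p² + S(k, m)`; since every draw has mean `p` (by
the same identity and strong induction), this gives
`Cov(z_k, z_{m+1}) = -(α / (m + 1)) (p (1 - p) + S(k, m))`.
The conditioning step holds for any sequence of Bernoulli draws whose parameters depend only on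
the past: summing out the draws from the last one down, each can be replaced by a fair coin.
-/

noncomputable section CausalBernoulli

variable {n : ℕ}

def DependsBelow {β : Type*} (g : (Fin n → Bool) → β) (t : ℕ) : Prop :=
  ∀ x y : Fin n → Bool, (∀ j : Fin n, (j : ℕ) < t → x j = y j) → g x = g y

def IsCausal (q : (Fin n → Bool) → Fin n → ℝ) : Prop :=
  ∀ (k : Fin n) (x y : Fin n → Bool), (∀ j : Fin n, (j : ℕ) < k → x j = y j) → q x k = q y k

def bernWeight (r : ℝ) (b : Bool) : ℝ := if b then r else 1 - r

def seqDens (q : (Fin n → Bool) → Fin n → ℝ) (x : Fin n → Bool) : ℝ :=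
  ∏ k, bernWeight (q x k) (x k)

/-- The density of the sequence whose draws from time `t` on are replaced by fair coins. -/
def truncSeqDens (q : (Fin n → Bool) → Fin n → ℝ) (t : ℕ) (x : Fin n → Bool) : ℝ :=
  ∏ k : Fin n, if (k : ℕ) < t then bernWeight (q x k) (x k) else 1 / 2

variable {q : (Fin n → Bool) → Fin n → ℝ}

lemma DependsBelow.mono {β : Type*} {g : (Fin n → Bool) → β} {t s : ℕ} (hg : DependsBelow g t)
    (hts : t ≤ s) : DependsBelow g s :=
  fun x y hxy => hg x y fun j hj => hxy j (hj.trans_le hts)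

lemma truncSeqDens_dependsBelow (hq : IsCausal q) (t : ℕ) :
    DependsBelow (truncSeqDens q t) t := by
  intro x y hxy
  refine prod_congr rfl fun k _ => ?_
  split_ifs with hk
  · rw [hq k x y fun j hj => hxy j (hj.trans hk), hxy k hk]
  · rfl

lemma truncSeqDens_succ (t : Fin n) (x : Fin n → Bool) :
    truncSeqDens q (t + 1) x = 2 * bernWeight (q x t) (x t) * truncSeqDens q t x := by
  unfold truncSeqDens
  rw [← mul_prod_erase _ _ (mem_univ t), ← mul_prod_erase _ _ (mem_univ t),
    if_pos (Nat.lt_succ_self _), if_neg (lt_irrefl _)]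
  have hrest : ∀ k ∈ univ.erase t, (if (k : ℕ) < t + 1 then bernWeight (q x k) (x k) else 1 / 2)
      = if (k : ℕ) < t then bernWeight (q x k) (x k) else 1 / 2 := by
    intro k hk
    have : (k : ℕ) ≠ t := Fin.val_ne_of_ne (ne_of_mem_erase hk)
    simp only [Nat.lt_succ_iff_lt_or_eq, this, or_false]
  rw [prod_congr rfl hrest]
  ring

lemma truncSeqDens_zero (x : Fin n → Bool) : truncSeqDens q 0 x = (1 / 2) ^ n := by
  simp [truncSeqDens]

lemma truncSeqDens_self (x : Fin n → Bool) : truncSeqDens q n x = seqDens q x :=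
  prod_congr rfl fun k _ => if_pos k.isLt

lemma sum_eq_sum_funSplitAt {ι M : Type*} [Fintype ι] [DecidableEq ι] [AddCommMonoid M] (t : ι)
    (F : (ι → Bool) → M) :
    ∑ x, F x = ∑ y : {j // j ≠ t} → Bool,
      (F ((Equiv.funSplitAt t Bool).symm (true, y))
        + F ((Equiv.funSplitAt t Bool).symm (false, y))) := by
  rw [← Equiv.sum_comp (Equiv.funSplitAt t Bool).symm, Fintype.sum_prod_type]
  simp only [Fintype.sum_bool]
  rw [← sum_add_distrib]

lemma sum_truncSeqDens_succ_mul (hq : IsCausal q) (t : Fin n) {f : (Fin n → Bool) → ℝ}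
    (hf : DependsBelow f t) (h : Bool → ℝ) :
    ∑ x, truncSeqDens q (t + 1) x * (f x * h (x t))
      = ∑ x, truncSeqDens q t x * (f x * (q x t * h true + (1 - q x t) * h false)) := by
  rw [sum_eq_sum_funSplitAt t, sum_eq_sum_funSplitAt t]
  refine sum_congr rfl fun y _ => ?_
  set xT := (Equiv.funSplitAt t Bool).symm (true, y)
  set xF := (Equiv.funSplitAt t Bool).symm (false, y)
  have hagree : ∀ j : Fin n, (j : ℕ) < t → xT j = xF j := fun j hj => by
    simp [xT, xF, Fin.ne_of_lt hj]
  have hT : xT t = true := by simp [xT]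
  have hF : xF t = false := by simp [xF]
  simp only [truncSeqDens_succ, hT, hF, bernWeight, Bool.false_eq_true, ↓reduceIte,
    truncSeqDens_dependsBelow hq t xT xF hagree, hf xT xF hagree, hq t xT xF hagree]
  ring

lemma sum_truncSeqDens_mul_of_dependsBelow (hq : IsCausal q) {t s : ℕ} (hts : t ≤ s)
    (hsn : s ≤ n) {g : (Fin n → Bool) → ℝ} (hg : DependsBelow g t) :
    ∑ x, truncSeqDens q s x * g x = ∑ x, truncSeqDens q t x * g x := by
  induction s, hts using Nat.le_induction with
  | base => rfl
  | succ s hts ih =>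
    have h := sum_truncSeqDens_succ_mul hq ⟨s, hsn⟩ (hg.mono hts) (fun _ => 1)
    simp only [mul_one, add_sub_cancel] at h
    rw [h, ih (Nat.le_of_succ_le hsn)]

lemma sum_seqDens_mul_of_dependsBelow (hq : IsCausal q) {t : ℕ} (ht : t ≤ n)
    {g : (Fin n → Bool) → ℝ} (hg : DependsBelow g t) :
    ∑ x, seqDens q x * g x = ∑ x, truncSeqDens q t x * g x := by
  simp only [← truncSeqDens_self]
  exact sum_truncSeqDens_mul_of_dependsBelow hq ht le_rfl hg

lemma sum_seqDens (hq : IsCausal q) : ∑ x, seqDens q x = 1 := by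
  have h := sum_seqDens_mul_of_dependsBelow hq (Nat.zero_le n) (g := fun _ => 1) fun _ _ _ => rfl
  simp only [mul_one, truncSeqDens_zero, sum_const, card_univ, Fintype.card_fun, Fintype.card_bool,
    Fintype.card_fin, nsmul_eq_mul] at h
  rw [h]
  push_cast
  rw [← mul_pow]
  norm_num

lemma sum_seqDens_mul_b2r (hq : IsCausal q) (t : Fin n) {f : (Fin n → Bool) → ℝ}
    (hf : DependsBelow f t) :
    ∑ x, seqDens q x * (f x * b2r (x t)) = ∑ x, seqDens q x * (f x * q x t) := by
  have hfz : DependsBelow (fun x => f x * b2r (x t)) (t + 1) := fun x y hxy => by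
    dsimp only
    rw [hf.mono (Nat.le_succ _) x y hxy, hxy t (Nat.lt_succ_self _)]
  have hfq : DependsBelow (fun x => f x * q x t) t := fun x y hxy => by
    dsimp only
    rw [hf x y hxy, hq t x y hxy]
  rw [sum_seqDens_mul_of_dependsBelow hq t.isLt hfz, sum_truncSeqDens_succ_mul hq t hf,
    sum_seqDens_mul_of_dependsBelow hq t.isLt.le hfq]
  simp [b2r]

end CausalBernoulli

section DBsample

variable {n : ℕ} {p α : ℝ}

lemma b2r_mul_self (b : Bool) : b2r b * b2r b = b2r b := by
  cases b <;> simp [b2r]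

lemma b2r_nonneg (b : Bool) : 0 ≤ b2r b := by
  cases b <;> simp [b2r]

lemma b2r_le_one (b : Bool) : b2r b ≤ 1 := by
  cases b <;> simp [b2r]

lemma phat_eq_sum (x : Fin n → Bool) (t : ℕ) :
    phat x t = (t : ℝ)⁻¹ * ∑ j ∈ {j : Fin n | (j : ℕ) < t}, b2r (x j) := by
  rw [phat, sum_filter]
  congr 1
  refine sum_congr rfl fun j _ => ?_
  by_cases hj : (j : ℕ) < t <;> cases x j <;> simp [hj, b2r]

lemma phat_nonneg (x : Fin n → Bool) (t : ℕ) : 0 ≤ phat x t := by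
  rw [phat_eq_sum]
  exact mul_nonneg (by positivity) (sum_nonneg fun j _ => b2r_nonneg _)

lemma phat_le_one (x : Fin n → Bool) (t : ℕ) : phat x t ≤ 1 := by
  rcases Nat.eq_zero_or_pos t with rfl | ht
  · simp [phat]
  have hsum : ∑ j ∈ {j : Fin n | (j : ℕ) < t}, b2r (x j) ≤ t := by
    calc ∑ j ∈ {j : Fin n | (j : ℕ) < t}, b2r (x j)
        ≤ #{j : Fin n | (j : ℕ) < t} := by
          simpa using sum_le_card_nsmul _ _ 1 fun j _ => b2r_le_one (x j)
      _ ≤ t := by exact_mod_cast Fin.card_filter_val_lt.trans_le (min_le_right _ _)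
  rw [phat_eq_sum, inv_mul_le_iff₀ (by exact_mod_cast ht), mul_one]
  exact hsum

lemma phat_dependsBelow (t : ℕ) : DependsBelow (fun x : Fin n → Bool => phat x t) t := by
  intro x y hxy
  simp only [phat_eq_sum]
  congr 1
  exact sum_congr rfl fun j hj => by rw [hxy j (mem_filter.mp hj).2]

lemma dbq_isCausal (p α : ℝ) : IsCausal (fun x (k : Fin n) => dbq p α x k) := by
  intro k x y hxy
  simp only [dbq, phat_dependsBelow k x y hxy]

def NoClipping (n : ℕ) (p α : ℝ) : Prop :=
  ∀ (x : Fin n → Bool) {t : ℕ}, t ≠ 0 → dbq p α x t = p * (1 + α) - α * phat x t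

/-- Since `0 ≤ p̂ ≤ 1`, the bound on `α` keeps `p (1 + α) - α p̂` inside `[0, 1]`. -/
lemma noClipping_of_le_min (hp0 : 0 < p) (hp1 : p < 1) (hα0 : 0 < α)
    (hα : α ≤ min ((1 - p) / p) (p / (1 - p))) : NoClipping n p α := by
  intro x t ht
  have hαp : α * p ≤ 1 - p := (le_div_iff₀ hp0).mp (le_min_iff.mp hα).1
  have hαp' : α * (1 - p) ≤ p := (le_div_iff₀ (by linarith)).mp (le_min_iff.mp hα).2
  have h0 := mul_nonneg hα0.le (phat_nonneg x t)
  have h1 := mul_le_mul_of_nonneg_left (phat_le_one x t) hα0.le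
  rw [dbq, if_neg ht, max_eq_right (by nlinarith), min_eq_right (by nlinarith)]

lemma dbDens_eq_seqDens : dbDens p α = seqDens (fun x (k : Fin n) => dbq p α x k) := rfl

lemma sum_dbDens : ∑ x : Fin n → Bool, dbDens p α x = 1 :=
  sum_seqDens (dbq_isCausal p α)

lemma sum_mul_phat (w f : (Fin n → Bool) → ℝ) (t : ℕ) :
    ∑ x, w x * (f x * phat x t)
      = (t : ℝ)⁻¹ * ∑ j ∈ {j : Fin n | (j : ℕ) < t}, ∑ x, w x * (f x * b2r (x j)) := by
  simp only [phat_eq_sum, mul_sum, sum_comm (s := univ)]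
  exact sum_congr rfl fun x _ => sum_congr rfl fun j _ => by ring

lemma sum_dbDens_mul_b2r_of_dependsBelow (hclip : NoClipping n p α) (t : Fin n) (ht : (t : ℕ) ≠ 0)
    {f : (Fin n → Bool) → ℝ} (hf : DependsBelow f t) :
    ∑ x, dbDens p α x * (f x * b2r (x t))
      = p * (1 + α) * ∑ x, dbDens p α x * f x
        - α / t * ∑ j ∈ {j : Fin n | (j : ℕ) < t}, ∑ x, dbDens p α x * (f x * b2r (x j)) := by
  rw [dbDens_eq_seqDens, sum_seqDens_mul_b2r (dbq_isCausal p α) t hf, ← dbDens_eq_seqDens,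
    div_eq_mul_inv, mul_assoc α, ← sum_mul_phat, mul_sum, mul_sum, ← sum_sub_distrib]
  refine sum_congr rfl fun x _ => ?_
  rw [hclip x ht]
  ring

lemma sum_dbDens_mul_b2r (hclip : NoClipping n p α) (j : Fin n) :
    ∑ x, dbDens p α x * b2r (x j) = p := by
  induction j using Fin.strong_induction_on with | _ j ih
  rcases eq_or_ne (j : ℕ) 0 with hj | hj
  · have h := sum_seqDens_mul_b2r (dbq_isCausal p α) j (f := fun _ => 1) fun _ _ _ => rfl
    have hq0 : ∀ x : Fin n → Bool, dbq p α x j = p := fun x => by simp [dbq, hj]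
    simp only [one_mul, hq0, ← sum_mul, ← dbDens_eq_seqDens, sum_dbDens] at h
    exact h
  · have h := sum_dbDens_mul_b2r_of_dependsBelow hclip j hj (f := fun _ => 1) fun _ _ _ => rfl
    simp only [one_mul, mul_one, sum_dbDens] at h
    rw [h, sum_congr rfl fun i hi => ih i (Fin.lt_def.mpr (mem_filter.mp hi).2), sum_const,
      Fin.card_filter_val_lt, min_eq_right j.isLt.le, nsmul_eq_mul]
    field_simp
    ring

lemma dbCov_eq (hclip : NoClipping n p α) (k j : Fin n) :
    dbCov p α k j = ∑ x, dbDens p α x * (b2r (x k) * b2r (x j)) - p * p := by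
  rw [dbCov, sum_dbDens_mul_b2r hclip, sum_dbDens_mul_b2r hclip]

lemma dbS_eq_sum_erase (k : Fin n) (m : ℕ) :
    dbS p α k m = ∑ j ∈ Finset.erase {j : Fin n | (j : ℕ) < m + 1} k, dbCov p α k j := by
  rw [dbS, ← sum_filter]
  congr 1
  ext j
  simp [and_comm]

lemma dbS_succ {k : Fin n} {m : ℕ} (hk : (k : ℕ) ≤ m) (hm : m + 1 < n) :
    dbS p α k (m + 1) = dbS p α k m + dbCov p α k ⟨m + 1, hm⟩ := by
  have hks : k ≠ ⟨m + 1, hm⟩ := Fin.ne_of_val_ne (by dsimp only; omega)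
  have hinsert : ({j : Fin n | (j : ℕ) < m + 1 + 1} : Finset (Fin n))
      = insert ⟨m + 1, hm⟩ ({j : Fin n | (j : ℕ) < m + 1} : Finset (Fin n)) := by
    ext j
    simp only [mem_filter, mem_univ, true_and, mem_insert, Fin.ext_iff]
    omega
  rw [dbS_eq_sum_erase, dbS_eq_sum_erase, hinsert, erase_insert_of_ne hks.symm,
    sum_insert (by simp), add_comm]

lemma sum_second_moment_eq (hclip : NoClipping n p α) {k : Fin n} {m : ℕ} (hk : (k : ℕ) ≤ m)
    (hm : m < n) :
    ∑ j ∈ {j : Fin n | (j : ℕ) < m + 1}, ∑ x, dbDens p α x * (b2r (x k) * b2r (x j))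
      = p + m * (p * p) + dbS p α k m := by
  have hkmem : k ∈ ({j : Fin n | (j : ℕ) < m + 1} : Finset (Fin n)) :=
    mem_filter.mpr ⟨mem_univ k, Nat.lt_succ_of_le hk⟩
  have hcard : #(Finset.erase {j : Fin n | (j : ℕ) < m + 1} k) = m := by
    rw [card_erase_of_mem hkmem, Fin.card_filter_val_lt, min_eq_right hm]
    rfl
  rw [← add_sum_erase _ _ hkmem, dbS_eq_sum_erase]
  simp only [b2r_mul_self, sum_dbDens_mul_b2r hclip, dbCov_eq hclip]
  rw [sum_sub_distrib, sum_const, hcard, nsmul_eq_mul]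
  ring

end DBsample

/-- Indices are 0-based: draw `m + 1` is sample `m + 2` of the paper. -/
theorem dbsample_covariance_sum_recursion (p α : ℝ) (hp0 : 0 < p) (hp1 : p < 1)
    (hα0 : 0 < α) (hα : α ≤ min ((1 - p) / p) (p / (1 - p)))
    (n : ℕ) (k : Fin n) (m : ℕ) (hk : (k : ℕ) ≤ m) (hm : m + 1 < n) :
    dbS p α k (m + 1)
      = dbS p α k m - (α / ((m : ℝ) + 1)) * (p * (1 - p) + dbS p α k m) := by
  have hclip : NoClipping n p α := noClipping_of_le_min hp0 hp1 hα0 hα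
  have hcross := sum_dbDens_mul_b2r_of_dependsBelow hclip ⟨m + 1, hm⟩ m.succ_ne_zero
    (f := fun x => b2r (x k)) fun x y hxy => by dsimp only; rw [hxy k (Nat.lt_succ_of_le hk)]
  rw [dbS_succ hk hm, dbCov_eq hclip, hcross, sum_dbDens_mul_b2r hclip,
    sum_second_moment_eq hclip hk (by omega)]
  push_cast
  field_simp
  ring
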